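/- If there exists a constant B ≥ 1 such that for all m ≥ n, x* ∈ X*: Σ_{k=n}^m ‖(A_m^k)* x*‖ ≤ B ‖x*‖, then (m-n+1)‖(A_m^n)* x*‖ ≤ B² ‖x*‖ for all m ≥ n and x* ∈ X*. -/

import Mathlib

open scoped BigOperators

/-- The evolution operator `A_m^n = A(m) ∘ ⋯ ∘ A(n+1)`, with `A_n^n = 1`. -/
noncomputable def evol {X : Type*} [NormedAddCommGroup X] [NormedSpace ℝ X]
    (A : ℕ → X →L[ℝ] X) (m n : ℕ) : X →L[ℝ] X :=
  ((List.range (m - n)).map (fun k => A (n + k + 1))).foldl (fun P B => B ∘L P) 1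

/-!
Writing `A_m^n = A_m^k A_k^n` for `n ≤ k ≤ m`, the single term `‖x* A_k^n‖ ≤ B ‖x*‖` of the
hypothesis, applied to the functional `x* A_m^k`, gives `‖x* A_m^n‖ ≤ B ‖x* A_m^k‖`. Summing over the `m - n + 1` indices `k ∈ [n, m]`
and applying the hypothesis once more to `x*` yields `(m - n + 1) ‖x* A_m^n‖ ≤ B · B ‖x*‖`.
-/

section Evolution

variable {X : Type*} [NormedAddCommGroup X] [NormedSpace ℝ X] (A : ℕ → X →L[ℝ] X)

@[simp]
lemma evol_self (n : ℕ) : evol A n n = 1 := by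
  simp [evol]

lemma evol_succ {n m : ℕ} (h : n ≤ m) : evol A (m + 1) n = A (m + 1) ∘L evol A m n := by
  unfold evol
  rw [Nat.succ_sub h, List.range_succ, List.map_append, List.foldl_append]
  simp only [List.map_cons, List.map_nil, List.foldl_cons, List.foldl_nil]
  congr 2
  omega

lemma evol_trans {n k m : ℕ} (hnk : n ≤ k) (hkm : k ≤ m) :
    evol A m n = evol A m k ∘L evol A k n := by
  induction m, hkm using Nat.le_induction with
  | base => rw [evol_self, ContinuousLinearMap.one_def, ContinuousLinearMap.id_comp]
  | succ m hkm ih =>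
    rw [evol_succ A (hnk.trans hkm), ih, evol_succ A hkm, ContinuousLinearMap.comp_assoc]

variable {A} {B : ℝ}

lemma norm_comp_evol_le_of_sum_le
    (h : ∀ n m : ℕ, n ≤ m → ∀ xs : X →L[ℝ] ℝ,
      ∑ k ∈ Finset.Icc n m, ‖xs.comp (evol A m k)‖ ≤ B * ‖xs‖) {n m : ℕ} (hnm : n ≤ m) (xs : X →L[ℝ] ℝ) :
    ‖xs.comp (evol A m n)‖ ≤ B * ‖xs‖ :=
  (Finset.single_le_sum (f := fun k => ‖xs.comp (evol A m k)‖) (fun _ _ => norm_nonneg _)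
    (Finset.left_mem_Icc.mpr hnm)).trans (h n m hnm xs)

lemma norm_comp_evol_le_mul_norm_comp_evol_of_sum_le
    (h : ∀ n m : ℕ, n ≤ m → ∀ xs : X →L[ℝ] ℝ,
      ∑ k ∈ Finset.Icc n m, ‖xs.comp (evol A m k)‖ ≤ B * ‖xs‖) {n k m : ℕ} (hnk : n ≤ k) (hkm : k ≤ m)
    (xs : X →L[ℝ] ℝ) : ‖xs.comp (evol A m n)‖ ≤ B * ‖xs.comp (evol A m k)‖ := by
  rw [evol_trans A hnk hkm, ← ContinuousLinearMap.comp_assoc]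
  exact norm_comp_evol_le_of_sum_le h hnk _

end Evolution

theorem stmt7_general {X : Type*} [NormedAddCommGroup X] [NormedSpace ℝ X]
    (A : ℕ → X →L[ℝ] X) (B : ℝ) (hB : 1 ≤ B)
    (h : ∀ n m : ℕ, n ≤ m → ∀ xs : X →L[ℝ] ℝ,
      ∑ k ∈ Finset.Icc n m, ‖xs.comp (evol A m k)‖ ≤ B * ‖xs‖) :
    ∀ n m : ℕ, n ≤ m → ∀ xs : X →L[ℝ] ℝ,
      ((m : ℝ) - n + 1) * ‖xs.comp (evol A m n)‖ ≤ B ^ 2 * ‖xs‖ := by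
  intro n m hnm xs
  have hcard : ((Finset.Icc n m).card : ℝ) = (m : ℝ) - n + 1 := by
    rw [Nat.card_Icc, Nat.cast_sub (by omega)]
    push_cast
    ring
  calc ((m : ℝ) - n + 1) * ‖xs.comp (evol A m n)‖
      = ∑ _k ∈ Finset.Icc n m, ‖xs.comp (evol A m n)‖ := by
        rw [Finset.sum_const, nsmul_eq_mul, hcard]
    _ ≤ ∑ k ∈ Finset.Icc n m, B * ‖xs.comp (evol A m k)‖ :=
        Finset.sum_le_sum fun k hk => norm_comp_evol_le_mul_norm_comp_evol_of_sum_le h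
          (Finset.mem_Icc.mp hk).1 (Finset.mem_Icc.mp hk).2 xs
    _ = B * ∑ k ∈ Finset.Icc n m, ‖xs.comp (evol A m k)‖ := (Finset.mul_sum ..).symm
    _ ≤ B * (B * ‖xs‖) := mul_le_mul_of_nonneg_left (h n m hnm xs) (by linarith)
    _ = B ^ 2 * ‖xs‖ := by ring

theorem stmt7 {X : Type*} [NormedAddCommGroup X] [NormedSpace ℝ X] [CompleteSpace X]
    (A : ℕ → X →L[ℝ] X) (B : ℝ) (hB : 1 ≤ B)
    (h : ∀ n m : ℕ, n ≤ m → ∀ xs : X →L[ℝ] ℝ,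
      ∑ k ∈ Finset.Icc n m, ‖xs.comp (evol A m k)‖ ≤ B * ‖xs‖) :
    ∀ n m : ℕ, n ≤ m → ∀ xs : X →L[ℝ] ℝ,
      ((m : ℝ) - n + 1) * ‖xs.comp (evol A m n)‖ ≤ B ^ 2 * ‖xs‖ :=
  stmt7_general A B hB h
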